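/- arXiv:1203.5480 — 3 statements merged into one kernel-verified Lean document; each statement's English description precedes it below -/
import Mathlib

section
/- Let f be bi-univalent with inverse extension F. If 1 + zf''(z)/f'(z) ≺ φ(z) and F'(w) ≺ φ(w), then the second Taylor coefficient of f satisfies |a₂| ≤ √(3(B₁ + |B₂ − B₁|)/8). -/
open Metric Set Complex

noncomputable section

/-- `g` is subordinate to `h` on the unit disk: there is an analytic `ω : 𝔻 → 𝔻`
with `ω 0 = 0` such that `g = h ∘ ω` on `𝔻`. -/
def Subordinate (g h : ℂ → ℂ) : Prop :=
  ∃ ω : ℂ → ℂ, DifferentiableOn ℂ ω (ball 0 1) ∧ ω 0 = 0 ∧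
    (∀ z ∈ ball (0 : ℂ) 1, ω z ∈ ball (0 : ℂ) 1) ∧
    ∀ z ∈ ball (0 : ℂ) 1, g z = h (ω z)

/-!
Write `1 + z f''/f' = φ ∘ ω` and `F' = φ ∘ τ` with Schwarz functions `ω, τ`, and put
`c₁ = ω'(0)`, `c₂ = ω''(0)/2`, `d₁ = τ'(0)`, `d₂ = τ''(0)/2`. Comparing second derivatives at `0`
gives `f'''(0) - f''(0)² = B₂ c₁² + B₁ c₂` and `F'''(0) = 2 B₂ d₁² + 2 B₁ d₂`, while differentiating
`F ∘ f = id` three times gives `F'''(0) = 3 f''(0)² - f'''(0)`. Eliminating `f'''(0)`,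
`2 f''(0)² = B₁ (c₂ + c₁²) + 2 B₁ (d₂ + d₁²) + (B₂ - B₁) (c₁² + 2 d₁²)`.
The Schwarz–Pick lemma applied to `ω(z)/z` gives `‖c₂‖ ≤ 1 - ‖c₁‖²`, so the first two brackets have
norm at most `1` and the last at most `3`, whence `8 ‖a₂‖² = 2 ‖f''(0)‖² ≤ 3 (B₁ + |B₂ - B₁|)`.
-/

open Filter Topology ComplexConjugate

section Derivatives

variable {𝕜 : Type*} [NontriviallyNormedField 𝕜] [CompleteSpace 𝕜] {u v q : 𝕜 → 𝕜} {a : 𝕜}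

theorem deriv_comp_eventuallyEq (hu : AnalyticAt 𝕜 u a) (hv : AnalyticAt 𝕜 v (u a)) :
    deriv (fun z => v (u z)) =ᶠ[𝓝 a] fun z => deriv v (u z) * deriv u z := by
  filter_upwards [hu.continuousAt.eventually hv.eventually_analyticAt, hu.eventually_analyticAt]
    with z hvz huz
  exact deriv_comp z hvz.differentiableAt huz.differentiableAt

theorem deriv_deriv_comp_eventuallyEq (hu : AnalyticAt 𝕜 u a) (hv : AnalyticAt 𝕜 v (u a)) :
    deriv (deriv fun z => v (u z)) =ᶠ[𝓝 a]
      fun z => deriv (deriv v) (u z) * deriv u z ^ 2 + deriv v (u z) * deriv (deriv u) z := by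
  filter_upwards [hu.continuousAt.eventually hv.eventually_analyticAt, hu.eventually_analyticAt]
    with z hvz huz
  have h : HasDerivAt (fun z => deriv v (u z) * deriv u z) _ z :=
    (hvz.deriv.differentiableAt.hasDerivAt.comp z huz.differentiableAt.hasDerivAt).fun_mul
      huz.deriv.differentiableAt.hasDerivAt
  rw [(deriv_comp_eventuallyEq huz hvz).deriv_eq, h.deriv, Function.comp_apply]
  ring

theorem deriv_deriv_deriv_comp (hu : AnalyticAt 𝕜 u a) (hv : AnalyticAt 𝕜 v (u a)) :
    deriv (deriv (deriv fun z => v (u z))) a =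
      deriv (deriv (deriv v)) (u a) * deriv u a ^ 3
        + 3 * deriv (deriv v) (u a) * deriv u a * deriv (deriv u) a
        + deriv v (u a) * deriv (deriv (deriv u)) a := by
  have hv' := hv.deriv.differentiableAt.hasDerivAt.comp a hu.differentiableAt.hasDerivAt
  have hv'' := hv.deriv.deriv.differentiableAt.hasDerivAt.comp a hu.differentiableAt.hasDerivAt
  have hu' := hu.deriv.differentiableAt.hasDerivAt
  have hu'' := hu.deriv.deriv.differentiableAt.hasDerivAt
  have h : HasDerivAt (fun z => deriv (deriv v) (u z) * deriv u z ^ 2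
      + deriv v (u z) * deriv (deriv u) z) _ a :=
    (hv''.fun_mul (hu'.fun_pow 2)).fun_add (hv'.fun_mul hu'')
  rw [(deriv_deriv_comp_eventuallyEq hu hv).deriv_eq, h.deriv]
  simp only [Function.comp_apply]
  ring

theorem deriv_deriv_deriv_of_eventually_leftInverse (hu : AnalyticAt 𝕜 u a)
    (hv : AnalyticAt 𝕜 v (u a)) (hvu : ∀ᶠ z in 𝓝 a, v (u z) = z) (hu1 : deriv u a = 1) :
    deriv (deriv (deriv v)) (u a) = 3 * deriv (deriv u) a ^ 2 - deriv (deriv (deriv u)) a := by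
  have h1 : deriv (fun z => v (u z)) =ᶠ[𝓝 a] fun _ => 1 := by
    filter_upwards [EventuallyEq.deriv (f := id) hvu] with z hz
    rw [hz, deriv_id]
  have h2 : deriv (deriv fun z => v (u z)) =ᶠ[𝓝 a] fun _ => 0 := by
    filter_upwards [h1.deriv] with z hz
    rw [hz, deriv_const]
  have order1 := (deriv_comp_eventuallyEq hu hv).self_of_nhds.symm.trans h1.self_of_nhds
  have order2 := (deriv_deriv_comp_eventuallyEq hu hv).self_of_nhds.symm.trans h2.self_of_nhds
  have order3 := (deriv_deriv_deriv_comp hu hv).symm.trans (by rw [h2.deriv_eq, deriv_const])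
  simp only [hu1] at order1 order2 order3
  linear_combination order3 - 3 * deriv (deriv u) a * order2
    + (3 * deriv (deriv u) a ^ 2 - deriv (deriv (deriv u)) a) * order1

theorem deriv_deriv_id_mul_at_zero (hq : AnalyticAt 𝕜 q 0) :
    deriv (deriv fun z => z * q z) 0 = 2 * deriv q 0 := by
  have h : deriv (fun z => z * q z) =ᶠ[𝓝 0] fun z => q z + z * deriv q z := by
    filter_upwards [hq.eventually_analyticAt] with z hz
    rw [deriv_fun_mul differentiableAt_fun_id hz.differentiableAt]
    simp
  have h' : HasDerivAt (fun z => q z + z * deriv q z) _ 0 :=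
    hq.differentiableAt.hasDerivAt.fun_add
      ((hasDerivAt_id' 0).fun_mul hq.deriv.differentiableAt.hasDerivAt)
  rw [h.deriv_eq, h'.deriv]
  ring

end Derivatives

theorem normSq_one_sub_conj_mul_sub_normSq_sub (a w : ℂ) :
    normSq (1 - conj a * w) - normSq (w - a) = (1 - normSq a) * (1 - normSq w) := by
  simp only [normSq_apply, sub_re, sub_im, mul_re, mul_im, conj_re, conj_im, one_re, one_im]
  ring

theorem normSq_sub_lt_normSq_one_sub_conj_mul {a w : ℂ} (ha : ‖a‖ < 1) (hw : ‖w‖ < 1) :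
    normSq (w - a) < normSq (1 - conj a * w) := by
  have key := normSq_one_sub_conj_mul_sub_normSq_sub a w
  rw [normSq_eq_norm_sq a, normSq_eq_norm_sq w] at key
  have hpos : 0 < (1 - ‖a‖ ^ 2) * (1 - ‖w‖ ^ 2) :=
    mul_pos (by nlinarith [norm_nonneg a]) (by nlinarith [norm_nonneg w])
  linarith

theorem one_sub_conj_mul_ne_zero {a w : ℂ} (ha : ‖a‖ < 1) (hw : ‖w‖ < 1) :
    1 - conj a * w ≠ 0 := by
  rw [← normSq_pos]
  exact (normSq_nonneg _).trans_lt (normSq_sub_lt_normSq_one_sub_conj_mul ha hw)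

theorem norm_sub_div_one_sub_conj_mul_lt_one {a w : ℂ} (ha : ‖a‖ < 1) (hw : ‖w‖ < 1) :
    ‖(w - a) / (1 - conj a * w)‖ < 1 := by
  rw [norm_div, div_lt_one (norm_pos_iff.mpr (one_sub_conj_mul_ne_zero ha hw)),
    ← sq_lt_sq₀ (norm_nonneg _) (norm_nonneg _), Complex.sq_norm, Complex.sq_norm]
  exact normSq_sub_lt_normSq_one_sub_conj_mul ha hw

theorem hasDerivAt_sub_div_one_sub_conj_mul {a : ℂ} (ha : ‖a‖ < 1) :
    HasDerivAt (fun w => (w - a) / (1 - conj a * w)) (1 / (1 - ‖a‖ ^ 2 : ℝ)) a := by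
  have hden := one_sub_conj_mul_ne_zero ha ha
  refine (((hasDerivAt_id' a).sub_const a).fun_div
    ((hasDerivAt_const a 1).fun_sub ((hasDerivAt_id' a).const_mul (conj a))) hden).congr_deriv ?_
  rw [conj_mul'] at hden ⊢
  push_cast
  field_simp
  ring

theorem norm_deriv_le_one_sub_sq_of_mapsTo_ball {g : ℂ → ℂ}
    (hg : DifferentiableOn ℂ g (ball 0 1)) (hmaps : MapsTo g (ball 0 1) (ball 0 1)) :
    ‖deriv g 0‖ ≤ 1 - ‖g 0‖ ^ 2 := by
  set a := g 0
  have ha : ‖a‖ < 1 := mem_ball_zero_iff.mp (hmaps (mem_ball_self one_pos))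
  have hga : HasDerivAt g (deriv g 0) 0 :=
    (hg.differentiableAt (ball_mem_nhds 0 one_pos)).hasDerivAt
  have hdiff : DifferentiableOn ℂ (fun z => (g z - a) / (1 - conj a * g z)) (ball 0 1) :=
    (hg.sub_const a).div ((differentiableOn_const 1).sub (hg.const_mul _))
      fun z hz => one_sub_conj_mul_ne_zero ha (mem_ball_zero_iff.mp (hmaps hz))
  have hmaps' : MapsTo (fun z => (g z - a) / (1 - conj a * g z)) (ball 0 1) (closedBall 0 1) :=
    fun z hz => mem_closedBall_zero_iff.mpr
      (norm_sub_div_one_sub_conj_mul_lt_one ha (mem_ball_zero_iff.mp (hmaps hz))).le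
  have hschwarz := Complex.norm_deriv_le_one_of_mapsTo_ball hdiff
    (by rwa [show (g 0 - a) / (1 - conj a * g 0) = 0 by simp [a]]) one_pos
  have hder : HasDerivAt (fun z => (g z - a) / (1 - conj a * g z)) _ 0 :=
    (hasDerivAt_sub_div_one_sub_conj_mul ha).comp 0 hga
  rw [hder.deriv, norm_mul, norm_div,
    norm_one, norm_real, Real.norm_of_nonneg (by nlinarith [norm_nonneg a]),
    div_mul_eq_mul_div, one_mul, div_le_one (by nlinarith [norm_nonneg a])] at hschwarz
  exact hschwarz

theorem norm_deriv_le_one_sub_sq_of_mapsTo_closedBall {g : ℂ → ℂ}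
    (hg : DifferentiableOn ℂ g (ball 0 1)) (hmaps : MapsTo g (ball 0 1) (closedBall 0 1)) :
    ‖deriv g 0‖ ≤ 1 - ‖g 0‖ ^ 2 := by
  by_cases hopen : MapsTo g (ball 0 1) (ball 0 1)
  · exact norm_deriv_le_one_sub_sq_of_mapsTo_ball hg hopen
  obtain ⟨z₀, hz₀, hgz₀⟩ := not_forall₂.mp hopen
  -- `‖g‖` attains its maximum `1` at `z₀`, so `g` is constant
  have hmax : IsMaxOn (norm ∘ g) (ball 0 1) z₀ := fun z hz => by
    simpa [le_antisymm (mem_closedBall_zero_iff.mp (hmaps hz₀)) (not_lt.mp (by simpa using hgz₀))]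
      using hmaps hz
  have hconst : g =ᶠ[𝓝 0] fun _ => g z₀ :=
    eventually_of_mem (ball_mem_nhds 0 one_pos) (Complex.eqOn_of_isPreconnected_of_isMaxOn_norm
      (convex_ball 0 1).isPreconnected isOpen_ball hg hz₀ hmax)
  rw [hconst.deriv_eq, deriv_const, norm_zero, sub_nonneg]
  exact pow_le_one₀ (norm_nonneg _) (mem_closedBall_zero_iff.mp (hmaps (mem_ball_self one_pos)))

theorem norm_deriv_deriv_div_two_le_of_mapsTo_ball {ω : ℂ → ℂ}
    (hω : DifferentiableOn ℂ ω (ball 0 1)) (hω0 : ω 0 = 0)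
    (hmaps : MapsTo ω (ball 0 1) (ball 0 1)) :
    ‖deriv (deriv ω) 0 / 2‖ ≤ 1 - ‖deriv ω 0‖ ^ 2 := by
  have hb : ball (0 : ℂ) 1 ∈ 𝓝 0 := ball_mem_nhds 0 one_pos
  have hg : DifferentiableOn ℂ (dslope ω 0) (ball 0 1) := (differentiableOn_dslope hb).mpr hω
  have hω_eq : ω = fun z => z * dslope ω 0 z := funext fun z => by
    simpa [hω0] using (sub_smul_dslope ω 0 z).symm
  have hgmaps : MapsTo (dslope ω 0) (ball 0 1) (closedBall 0 1) := fun z hz => by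
    simpa using Complex.norm_dslope_le_div_of_mapsTo_ball hω
      (by simpa [hω0] using hmaps.mono_right ball_subset_closedBall) hz
  have h2 := deriv_deriv_id_mul_at_zero (hg.analyticAt hb)
  rw [← hω_eq] at h2
  rw [h2, mul_div_cancel_left₀ _ two_ne_zero, ← dslope_same ω 0]
  exact norm_deriv_le_one_sub_sq_of_mapsTo_closedBall hg hgmaps

theorem Subordinate.exists_schwarz_coeffs {g φ : ℂ → ℂ} (h : Subordinate g φ)
    (hφ : AnalyticAt ℂ φ 0) :
    ∃ c₁ c₂ : ℂ, ‖c₂‖ ≤ 1 - ‖c₁‖ ^ 2 ∧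
      deriv (deriv g) 0 = deriv (deriv φ) 0 * c₁ ^ 2 + 2 * deriv φ 0 * c₂ := by
  obtain ⟨ω, hω, hω0, hmaps, hgω⟩ := h
  have hb : ball (0 : ℂ) 1 ∈ 𝓝 0 := ball_mem_nhds 0 one_pos
  have hωA : AnalyticAt ℂ ω 0 := hω.analyticAt hb
  have hφω : AnalyticAt ℂ φ (ω 0) := by rwa [hω0]
  have hgω' : g =ᶠ[𝓝 0] fun z => φ (ω z) := eventually_of_mem hb hgω
  refine ⟨deriv ω 0, deriv (deriv ω) 0 / 2,
    norm_deriv_deriv_div_two_le_of_mapsTo_ball hω hω0 hmaps, ?_⟩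
  rw [hgω'.deriv.deriv_eq, (deriv_deriv_comp_eventuallyEq hωA hφω).self_of_nhds]
  simp only [hω0]
  ring

theorem norm_add_sq_le_one_of_norm_le_one_sub_sq {c₁ c₂ : ℂ} (hc : ‖c₂‖ ≤ 1 - ‖c₁‖ ^ 2) :
    ‖c₂ + c₁ ^ 2‖ ≤ 1 :=
  calc ‖c₂ + c₁ ^ 2‖ ≤ ‖c₂‖ + ‖c₁‖ ^ 2 := (norm_add_le _ _).trans_eq (by rw [norm_pow])
    _ ≤ 1 := by linarith

theorem norm_sq_le_one_of_norm_le_one_sub_sq {c₁ c₂ : ℂ} (hc : ‖c₂‖ ≤ 1 - ‖c₁‖ ^ 2) :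
    ‖c₁ ^ 2‖ ≤ 1 := by
  rw [norm_pow]; linarith [norm_nonneg c₂]

theorem norm_coeff_combination_le {B₁ : ℝ} (B₂ : ℝ) (hB₁ : 0 ≤ B₁) {c₁ c₂ d₁ d₂ : ℂ}
    (hc : ‖c₂‖ ≤ 1 - ‖c₁‖ ^ 2) (hd : ‖d₂‖ ≤ 1 - ‖d₁‖ ^ 2) :
    ‖B₁ * (c₂ + c₁ ^ 2) + 2 * B₁ * (d₂ + d₁ ^ 2) + (B₂ - B₁) * (c₁ ^ 2 + 2 * d₁ ^ 2)‖
      ≤ 3 * (B₁ + |B₂ - B₁|) := by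
  have hcd : ‖c₁ ^ 2 + 2 * d₁ ^ 2‖ ≤ 3 := by
    refine (norm_add_le _ _).trans ?_
    rw [norm_mul, RCLike.norm_ofNat]
    linarith [norm_sq_le_one_of_norm_le_one_sub_sq hc, norm_sq_le_one_of_norm_le_one_sub_sq hd]
  calc _ ≤ ‖(B₁ : ℂ) * (c₂ + c₁ ^ 2)‖ + ‖2 * (B₁ : ℂ) * (d₂ + d₁ ^ 2)‖
        + ‖((B₂ : ℂ) - B₁) * (c₁ ^ 2 + 2 * d₁ ^ 2)‖ := norm_add₃_le
    _ = B₁ * ‖c₂ + c₁ ^ 2‖ + 2 * B₁ * ‖d₂ + d₁ ^ 2‖ + |B₂ - B₁| * ‖c₁ ^ 2 + 2 * d₁ ^ 2‖ := by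
      rw [← ofReal_sub]
      simp only [norm_mul, norm_real, Real.norm_eq_abs, abs_of_nonneg hB₁, RCLike.norm_ofNat]
    _ ≤ B₁ * 1 + 2 * B₁ * 1 + |B₂ - B₁| * 3 := by
      gcongr
      exacts [norm_add_sq_le_one_of_norm_le_one_sub_sq hc,
        norm_add_sq_le_one_of_norm_le_one_sub_sq hd]
    _ = 3 * (B₁ + |B₂ - B₁|) := by ring

theorem deriv_deriv_one_add_mul_deriv_deriv_div_deriv {f : ℂ → ℂ} (hf : AnalyticAt ℂ f 0)
    (hf1 : deriv f 0 = 1) :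
    deriv (deriv fun z => 1 + z * deriv (deriv f) z / deriv f z) 0
      = 2 * (deriv (deriv (deriv f)) 0 - deriv (deriv f) 0 ^ 2) := by
  have hq : AnalyticAt ℂ (fun z => deriv (deriv f) z / deriv f z) 0 :=
    hf.deriv.deriv.div hf.deriv (by simp [hf1])
  have hp : (fun z => 1 + z * deriv (deriv f) z / deriv f z)
      = fun z => 1 + z * (deriv (deriv f) z / deriv f z) := by
    simp only [mul_div_assoc]
  rw [hp, deriv_const_add', deriv_deriv_id_mul_at_zero hq, deriv_fun_div
    hf.deriv.deriv.differentiableAt hf.deriv.differentiableAt (by simp [hf1]), hf1]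
  ring

theorem stmt11_general
    (f F : ℂ → ℂ)
    (hf : DifferentiableOn ℂ f (ball 0 1)) (hf0 : f 0 = 0) (hf1 : deriv f 0 = 1)
    (hF : DifferentiableOn ℂ F (ball 0 1))
    (hFf : ∀ᶠ z in nhds (0 : ℂ), F (f z) = z)
    (φ : ℂ → ℂ) (B₁ B₂ : ℝ)
    (hφ : DifferentiableOn ℂ φ (ball 0 1))
    (hB₁ : 0 < B₁) (hφ1 : deriv φ 0 = (B₁ : ℂ)) (hφ2 : iteratedDeriv 2 φ 0 = 2 * (B₂ : ℂ))
    (hfsub : Subordinate (fun z => 1 + z * deriv (deriv f) z / deriv f z) φ)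
    (hFsub : Subordinate (deriv F) φ) :
    ‖iteratedDeriv 2 f 0 / 2‖ ≤ Real.sqrt (3 * (B₁ + |B₂ - B₁|) / 8) := by
  have hb : ball (0 : ℂ) 1 ∈ 𝓝 0 := ball_mem_nhds 0 one_pos
  have hfA : AnalyticAt ℂ f 0 := hf.analyticAt hb
  have hφA : AnalyticAt ℂ φ 0 := hφ.analyticAt hb
  rw [iteratedDeriv_succ, iteratedDeriv_one] at hφ2 ⊢
  have hF3 :=
    deriv_deriv_deriv_of_eventually_leftInverse hfA (by rw [hf0]; exact hF.analyticAt hb) hFf hf1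
  rw [hf0] at hF3
  obtain ⟨c₁, c₂, hc, hfc⟩ := hfsub.exists_schwarz_coeffs hφA
  obtain ⟨d₁, d₂, hd, hFd⟩ := hFsub.exists_schwarz_coeffs hφA
  rw [deriv_deriv_one_add_mul_deriv_deriv_div_deriv hfA hf1, hφ1, hφ2] at hfc
  rw [hF3, hφ1, hφ2] at hFd
  have key : 2 * deriv (deriv f) 0 ^ 2 = B₁ * (c₂ + c₁ ^ 2) + 2 * B₁ * (d₂ + d₁ ^ 2)
      + (B₂ - B₁) * (c₁ ^ 2 + 2 * d₁ ^ 2) := by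
    linear_combination hfc / 2 + hFd
  have hbound := norm_coeff_combination_le B₂ hB₁.le hc hd
  rw [← key, norm_mul, norm_pow, RCLike.norm_ofNat] at hbound
  rw [Real.le_sqrt (norm_nonneg _) (by positivity), norm_div, RCLike.norm_ofNat]
  linarith

theorem stmt11
    (f F : ℂ → ℂ)
    (hf : DifferentiableOn ℂ f (ball 0 1)) (hf0 : f 0 = 0) (hf1 : deriv f 0 = 1)
    (hfi : InjOn f (ball 0 1))
    (hF : DifferentiableOn ℂ F (ball 0 1)) (hF0 : F 0 = 0) (hFi : InjOn F (ball 0 1))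
    (hFf : ∀ᶠ z in nhds (0 : ℂ), F (f z) = z)
    (φ : ℂ → ℂ) (B₁ B₂ : ℝ)
    (hφ : DifferentiableOn ℂ φ (ball 0 1)) (hφ0 : φ 0 = 1)
    (hB₁ : 0 < B₁) (hφ1 : deriv φ 0 = (B₁ : ℂ)) (hφ2 : iteratedDeriv 2 φ 0 = 2 * (B₂ : ℂ))
    (hfsub : Subordinate (fun z => 1 + z * deriv (deriv f) z / deriv f z) φ)
    (hFsub : Subordinate (deriv F) φ) :
    ‖iteratedDeriv 2 f 0 / 2‖ ≤ Real.sqrt (3 * (B₁ + |B₂ - B₁|) / 8) :=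
  stmt11_general f F hf hf0 hf1 hF hFf φ B₁ B₂ hφ hB₁ hφ1 hφ2 hfsub hFsub
end
end

section
/- Let 0 ≤ β < 1 and let f be bi-univalent with inverse extension F. If Re(1 + zf''(z)/f'(z)) > β on 𝔻 and Re F'(w) > β on 𝔻, then |a₂| ≤ √(3(1−β))/2 and |a₃| ≤ 5(1−β)/6. -/
/-!
Write `a = f''(0)` and `b = f'''(0)`, so `a₂ = a / 2` and `a₃ = b / 6`. The functions
`p z = 1 + z f''(z) / f'(z)` and `q = F'` are holomorphic on the disc, equal to `1` at `0` and
have real part `> β`, so Carathéodory's lemma (for `p - β` and `q - β`) bounds `‖p''(0)‖` and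
`‖q''(0)‖` by `4 (1 - β)`. Differentiating gives `p''(0) = 2 (b - a²)`, and differentiating
`F ∘ f = id` three times gives `q''(0) = F'''(0) = 3 a² - b`. Now use `2 a² = (b - a²) + (3 a² - b)`
and `2 b = 3 (b - a²) + (3 a² - b)`.

Carathéodory's lemma (`Re h ≥ 0` implies `‖h⁽ⁿ⁾(0)‖ ≤ 2 n! Re h(0)`): on the circle of radius `r`
the average of `z⁻ⁿ h̄` vanishes, so `h⁽ⁿ⁾(0) / n!` is the average of `z⁻ⁿ (h + h̄) = 2 z⁻ⁿ Re h`,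
whose norm is at most `2 r⁻ⁿ` times the average `Re h(0)` of `Re h`.

`p` is holomorphic only if `f'` has no zeros. This follows from the hypothesis on `p` itself:
near a zero of `f'` the real part of `z f''(z) / f'(z)` tends to `-∞` along the radius.
-/

open Metric Set Complex Real Filter Topology ComplexConjugate
open scoped Nat

theorem norm_circleAverage_le_circleAverage_norm {E : Type*} [NormedAddCommGroup E]
    [NormedSpace ℝ E] (f : ℂ → E) (c : ℂ) (R : ℝ) :
    ‖circleAverage f c R‖ ≤ circleAverage (fun z => ‖f z‖) c R := by
  rw [circleAverage, circleAverage, norm_smul, Real.norm_of_nonneg (by positivity), smul_eq_mul]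
  gcongr
  exact intervalIntegral.norm_integral_le_integral_norm two_pi_pos.le

theorem circleAverage_inv_pow_mul {g : ℂ → ℂ} {r : ℝ} (hr : 0 < r)
    (hg : DifferentiableOn ℂ g (closedBall 0 r)) (n : ℕ) :
    circleAverage (fun z => z⁻¹ ^ n * g z) 0 r = iteratedDeriv n g 0 / n ! := by
  rw [circleAverage_eq_circleIntegral hr.ne']
  have hcauchy := hg.circleIntegral_one_div_sub_center_pow_smul hr n
  simp only [sub_zero, smul_eq_mul] at hcauchy ⊢
  rw [show (fun z : ℂ => z⁻¹ * (z⁻¹ ^ n * g z)) = fun z => 1 / z ^ (n + 1) * g z by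
    ext z; rw [pow_succ, one_div, mul_inv, inv_pow]; ring, hcauchy]
  field_simp [two_pi_I_ne_zero]

theorem inv_eq_conj_div_of_mem_sphere {z : ℂ} {r : ℝ} (hz : z ∈ sphere (0 : ℂ) r) :
    z⁻¹ = conj z / (r ^ 2 : ℂ) := by
  rw [mem_sphere_zero_iff_norm] at hz
  rw [← hz, inv_def, div_eq_mul_inv, normSq_eq_norm_sq]
  push_cast; ring

theorem circleAverage_inv_pow_mul_conj {g : ℂ → ℂ} {r : ℝ} (hr : 0 < r)
    (hg : DifferentiableOn ℂ g (closedBall 0 r)) {n : ℕ} (hn : 0 < n) :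
    circleAverage (fun z => z⁻¹ ^ n * conj (g z)) 0 r = 0 := by
  have hmean : circleAverage (fun z => z ^ n * g z) 0 r = 0 := by
    rw [DiffContOnCl.circleAverage, zero_pow hn.ne', zero_mul]
    exact ((differentiableOn_pow n).mul hg).diffContOnCl_ball (by rw [abs_of_pos hr])
  have hint : CircleIntegrable (fun z => z ^ n * g z) 0 r :=
    (((continuous_pow n).continuousOn.mul hg.continuousOn).mono
      sphere_subset_closedBall).circleIntegrable hr.le
  calc circleAverage (fun z => z⁻¹ ^ n * conj (g z)) 0 r
      = circleAverage (fun z => ((r ^ 2 : ℂ) ^ n)⁻¹ • conjCLE (z ^ n * g z)) 0 r := by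
        refine circleAverage_congr_sphere fun z hz => ?_
        rw [abs_of_pos hr] at hz
        simp only [inv_eq_conj_div_of_mem_sphere hz, conjCLE_apply, map_mul, map_pow,
          smul_eq_mul]
        ring
    _ = 0 := by
        have hconj := conjCLE.toContinuousLinearMap.circleAverage_comp_comm hint
        simp only [Function.comp_def, ContinuousLinearEquiv.coe_coe] at hconj
        rw [circleAverage_fun_smul, hconj, hmean, map_zero, smul_zero]

theorem norm_iteratedDeriv_mul_pow_le_of_re_nonneg {h : ℂ → ℂ} {r : ℝ} (hr : 0 < r)
    (hh : DifferentiableOn ℂ h (closedBall 0 r)) (hre : ∀ z ∈ sphere (0 : ℂ) r, 0 ≤ (h z).re)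
    {n : ℕ} (hn : 0 < n) :
    ‖iteratedDeriv n h 0‖ * r ^ n ≤ 2 * n ! * (h 0).re := by
  have hcont : ContinuousOn h (sphere 0 r) := hh.continuousOn.mono sphere_subset_closedBall
  have hinv : ContinuousOn (fun z : ℂ => z⁻¹ ^ n) (sphere 0 r) :=
    (continuousOn_inv₀.mono fun z hz => ne_zero_of_mem_sphere hr.ne' ⟨z, hz⟩).pow n
  have hcoeff : iteratedDeriv n h 0 / n ! =
      circleAverage (fun z => z⁻¹ ^ n * ((2 * (h z).re : ℝ) : ℂ)) 0 r :=
    calc iteratedDeriv n h 0 / n !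
        = circleAverage (fun z => z⁻¹ ^ n * h z) 0 r
          + circleAverage (fun z => z⁻¹ ^ n * conj (h z)) 0 r := by
          rw [circleAverage_inv_pow_mul_conj hr hh hn, add_zero,
            circleAverage_inv_pow_mul hr hh]
      _ = circleAverage (fun z => z⁻¹ ^ n * ((2 * (h z).re : ℝ) : ℂ)) 0 r := by
          have hint : CircleIntegrable (fun z => z⁻¹ ^ n * h z) 0 r :=
            (hinv.mul hcont).circleIntegrable hr.le
          have hint' : CircleIntegrable (fun z => z⁻¹ ^ n * conj (h z)) 0 r :=
            (hinv.mul (continuous_conj.comp_continuousOn hcont)).circleIntegrable hr.le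
          rw [← circleAverage_fun_add hint hint']
          congr 1
          ext z
          rw [← mul_add, add_conj]
  have hmean : circleAverage (fun z => (h z).re) 0 r = (h 0).re := by
    have hre_comm := reCLM.circleAverage_comp_comm (hcont.circleIntegrable hr.le)
    simp only [Function.comp_def, reCLM_apply] at hre_comm
    rw [hre_comm, DiffContOnCl.circleAverage (hh.diffContOnCl_ball (by rw [abs_of_pos hr]))]
  have hbound : ‖iteratedDeriv n h 0 / (n ! : ℂ)‖ ≤ (r ^ n)⁻¹ * (2 * (h 0).re) :=
    calc ‖iteratedDeriv n h 0 / (n ! : ℂ)‖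
        ≤ circleAverage (fun z => ‖z⁻¹ ^ n * ((2 * (h z).re : ℝ) : ℂ)‖) 0 r := by
          rw [hcoeff]; exact norm_circleAverage_le_circleAverage_norm _ _ _
      _ = circleAverage (fun z => (r ^ n)⁻¹ * 2 * (h z).re) 0 r := by
          refine circleAverage_congr_sphere fun z hz => ?_
          rw [abs_of_pos hr] at hz
          rw [norm_mul, norm_pow, norm_inv, mem_sphere_zero_iff_norm.1 hz, norm_real,
            Real.norm_of_nonneg (by linarith [hre z hz])]
          ring
      _ = (r ^ n)⁻¹ * (2 * (h 0).re) := by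
          have hsmul := circleAverage_fun_smul (a := (r ^ n)⁻¹ * 2) (f := fun z => (h z).re)
            (c := 0) (R := r)
          simp only [smul_eq_mul] at hsmul
          rw [hsmul, hmean, mul_assoc]
  rw [norm_div, Complex.norm_natCast, div_le_iff₀ (by positivity)] at hbound
  calc ‖iteratedDeriv n h 0‖ * r ^ n
      ≤ (r ^ n)⁻¹ * (2 * (h 0).re) * n ! * r ^ n := by gcongr
    _ = 2 * n ! * (h 0).re := by field_simp

theorem norm_iteratedDeriv_le_of_re_nonneg {h : ℂ → ℂ}
    (hh : DifferentiableOn ℂ h (ball 0 1)) (hre : ∀ z ∈ ball (0 : ℂ) 1, 0 ≤ (h z).re)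
    {n : ℕ} (hn : 0 < n) :
    ‖iteratedDeriv n h 0‖ ≤ 2 * n ! * (h 0).re := by
  have hlim : Tendsto (fun r : ℝ => ‖iteratedDeriv n h 0‖ * r ^ n) (𝓝[<] 1)
      (𝓝 (‖iteratedDeriv n h 0‖)) := by
    simpa using ((continuous_pow n).const_mul ‖iteratedDeriv n h 0‖).continuousWithinAt
      (s := Iio 1) (x := 1) |>.tendsto
  refine le_of_tendsto hlim ?_
  filter_upwards [Ioo_mem_nhdsLT one_pos] with r hr
  exact norm_iteratedDeriv_mul_pow_le_of_re_nonneg hr.1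
    (hh.mono (closedBall_subset_ball hr.2))
    (fun z hz => hre z (sphere_subset_closedBall.trans (closedBall_subset_ball hr.2) hz)) hn

theorem norm_iteratedDeriv_le_of_le_re {g : ℂ → ℂ} {β : ℝ}
    (hg : DifferentiableOn ℂ g (ball 0 1)) (hre : ∀ z ∈ ball (0 : ℂ) 1, β ≤ (g z).re)
    {n : ℕ} (hn : 0 < n) :
    ‖iteratedDeriv n g 0‖ ≤ 2 * n ! * ((g 0).re - β) := by
  have h := norm_iteratedDeriv_le_of_re_nonneg (h := fun z => -β + g z)
    ((differentiableOn_const _).add hg) (fun z hz => by simpa using hre z hz) hn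
  rwa [iteratedDeriv_const_add hn, add_re, neg_re, ofReal_re, neg_add_eq_sub] at h

theorem AnalyticAt.tendsto_sub_mul_deriv_div {𝕜 : Type*} [NontriviallyNormedField 𝕜]
    [CompleteSpace 𝕜] {g : 𝕜 → 𝕜} {z₀ : 𝕜} (hg : AnalyticAt 𝕜 g z₀)
    (hfin : analyticOrderAt g z₀ ≠ ⊤) :
    Tendsto (fun z => (z - z₀) * deriv g z / g z) (𝓝[≠] z₀)
      (𝓝 (analyticOrderNatAt g z₀)) := by
  obtain ⟨u, hu, hu0, hgu⟩ := hg.analyticOrderAt_ne_top.1 hfin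
  set m := analyticOrderNatAt g z₀
  have hderiv : ∀ᶠ z in 𝓝 z₀,
      deriv g z = m * (z - z₀) ^ (m - 1) * u z + (z - z₀) ^ m * deriv u z := by
    filter_upwards [hgu.deriv, hu.eventually_analyticAt] with z hz hzu
    rw [hz]
    have hprod := (((hasDerivAt_id' z).sub_const z₀).fun_pow m).fun_mul
      hzu.differentiableAt.hasDerivAt
    simp only [smul_eq_mul, hprod.deriv, mul_one]
  have hlog : ∀ᶠ z in 𝓝[≠] z₀,
      (z - z₀) * deriv g z / g z = m + (z - z₀) * deriv u z / u z := by
    filter_upwards [nhdsWithin_le_nhds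
      (hderiv.and (hgu.and (hu.continuousAt.eventually_ne hu0))), self_mem_nhdsWithin]
      with z ⟨hd, hz, hu⟩ hne
    have hsub : z - z₀ ≠ 0 := sub_ne_zero.2 hne
    rw [hd, hz, smul_eq_mul]
    rcases Nat.eq_zero_or_pos m with hm | hm
    · rw [hm]; simp
    · have hpow : (z - z₀) * (z - z₀) ^ (m - 1) = (z - z₀) ^ m := mul_pow_sub_one hm.ne' _
      field_simp
      linear_combination (m * u z) * hpow
  have hcont : ContinuousAt (fun z => (m : 𝕜) + (z - z₀) * deriv u z / u z) z₀ :=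
    continuousAt_const.add (((continuousAt_id.sub continuousAt_const).mul
      hu.deriv.continuousAt).div hu.continuousAt hu0)
  refine Tendsto.congr' (hlog.mono fun z hz => hz.symm) ?_
  simpa using hcont.tendsto.mono_left nhdsWithin_le_nhds

theorem ne_zero_of_forall_lt_re_mul_deriv_div {g : ℂ → ℂ} {β : ℝ}
    (hg : DifferentiableOn ℂ g (ball 0 1)) (hg0 : g 0 ≠ 0)
    (hre : ∀ z ∈ ball (0 : ℂ) 1, β < (z * deriv g z / g z).re) {z₀ : ℂ}
    (hz₀ : z₀ ∈ ball (0 : ℂ) 1) : g z₀ ≠ 0 := by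
  intro hzero
  have hz₀0 : z₀ ≠ 0 := by rintro rfl; exact hg0 hzero
  have hana : AnalyticOnNhd ℂ g (ball 0 1) := hg.analyticOnNhd isOpen_ball
  have hfin : analyticOrderAt g z₀ ≠ ⊤ :=
    hana.analyticOrderAt_ne_top_of_isPreconnected (convex_ball 0 1).isPreconnected
      (mem_ball_self one_pos) hz₀
      (by simp [(hana 0 (mem_ball_self one_pos)).analyticOrderAt_eq_zero.2 hg0])
  have hm : (0 : ℝ) < analyticOrderNatAt g z₀ := by
    have h := (hana z₀ hz₀).analyticOrderAt_ne_zero.2 hzero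
    rw [← Nat.cast_analyticOrderNatAt hfin] at h
    exact_mod_cast Nat.pos_of_ne_zero (by exact_mod_cast h)
  -- `γ T` runs along the radius towards `z₀`, with `γ T / (γ T - z₀) = 1 - T`.
  set γ : ℝ → ℂ := fun T => ((1 - T⁻¹ : ℝ) : ℂ) * z₀
  have hγ : Tendsto γ atTop (𝓝[≠] z₀) := by
    refine tendsto_nhdsWithin_iff.2 ⟨?_, ?_⟩
    · simpa [γ] using ((continuous_ofReal.tendsto _).comp
        (tendsto_inv_atTop_zero.const_sub 1)).mul_const z₀
    · filter_upwards [eventually_gt_atTop 0] with T hT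
      simp [γ, hz₀0, hT.ne']
  have hlim : Tendsto (fun T => (1 - T) * ((γ T - z₀) * deriv g (γ T) / g (γ T)).re)
      atTop atBot :=
    (tendsto_atBot_add_const_left _ 1 tendsto_neg_atTop_atBot).atBot_mul_pos hm
      ((continuous_re.tendsto _).comp
        ((hana z₀ hz₀).tendsto_sub_mul_deriv_div hfin |>.comp hγ))
  obtain ⟨T, hT1, hTβ⟩ :=
    ((eventually_gt_atTop 1).and (hlim.eventually_lt_atBot β)).exists
  have hTinv : 0 < T⁻¹ ∧ T⁻¹ < 1 := ⟨inv_pos.2 (by linarith), inv_lt_one_of_one_lt₀ hT1⟩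
  have hγball : γ T ∈ ball (0 : ℂ) 1 := by
    rw [mem_ball_zero_iff] at hz₀ ⊢
    rw [norm_mul, norm_real, Real.norm_of_nonneg (by linarith)]
    nlinarith [norm_nonneg z₀]
  have hγT : γ T = (1 - T) * (γ T - z₀) := by
    have hT0 : (T : ℂ) ≠ 0 := ofReal_ne_zero.2 (by linarith)
    simp only [γ]; push_cast; field_simp; ring
  have hre_γ : (γ T * deriv g (γ T) / g (γ T)).re
      = (1 - T) * ((γ T - z₀) * deriv g (γ T) / g (γ T)).re := by
    rw [← re_ofReal_mul]
    congr 1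
    nth_rw 1 [hγT]
    push_cast; ring
  linarith [hre (γ T) hγball]

section LeftInverse

variable {𝕜 : Type*} [NontriviallyNormedField 𝕜] {f F : 𝕜 → 𝕜} {x : 𝕜}

theorem deriv_mul_deriv_of_comp_eventuallyEq_id (hf : DifferentiableAt 𝕜 f x)
    (hF : DifferentiableAt 𝕜 F (f x)) (hFf : F ∘ f =ᶠ[𝓝 x] id) :
    deriv F (f x) * deriv f x = 1 := by
  rw [← deriv_comp x hF hf, hFf.deriv_eq, deriv_id]

theorem iteratedDeriv_three_of_comp_eventuallyEq_id (hf : ContDiffAt 𝕜 3 f x)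
    (hF : ContDiffAt 𝕜 3 F (f x)) (hFf : F ∘ f =ᶠ[𝓝 x] id) (hf1 : deriv f x = 1) :
    iteratedDeriv 3 F (f x) = 3 * iteratedDeriv 2 f x ^ 2 - iteratedDeriv 3 f x := by
  have hF1 : deriv F (f x) = 1 := by
    simpa [hf1] using deriv_mul_deriv_of_comp_eventuallyEq_id
      (hf.differentiableAt (by norm_num)) (hF.differentiableAt (by norm_num)) hFf
  have h2 := iteratedDeriv_comp_two (hF.of_le (by norm_num)) (hf.of_le (by norm_num))
  have h3 := iteratedDeriv_comp_three hF hf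
  rw [hFf.iteratedDeriv_eq, hf1, hF1] at h2 h3
  simp only [iteratedDeriv_id, OfNat.ofNat_ne_zero, ↓reduceIte, OfNat.ofNat_ne_one, one_pow,
    mul_one, one_mul] at h2 h3
  linear_combination 3 * iteratedDeriv 2 f x * h2 - h3

end LeftInverse

theorem iteratedDeriv_two_one_add_mul_deriv_deriv_div_deriv {𝕜 : Type*}
    [NontriviallyNormedField 𝕜] [CompleteSpace 𝕜] {f : 𝕜 → 𝕜} (hf : AnalyticAt 𝕜 f 0)
    (hf1 : deriv f 0 = 1) :
    iteratedDeriv 2 (fun z => 1 + z * deriv (deriv f) z / deriv f z) 0 =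
      2 * (iteratedDeriv 3 f 0 - iteratedDeriv 2 f 0 ^ 2) := by
  set h := fun z => deriv (deriv f) z / deriv f z
  have hf1' : deriv f 0 ≠ 0 := by rw [hf1]; exact one_ne_zero
  have hh : AnalyticAt 𝕜 h 0 := hf.deriv.deriv.div hf.deriv hf1'
  have hh' : deriv h 0 = iteratedDeriv 3 f 0 - iteratedDeriv 2 f 0 ^ 2 := by
    rw [deriv_fun_div hf.deriv.deriv.differentiableAt hf.deriv.differentiableAt hf1', hf1]
    simp only [mul_one, one_pow, div_one, iteratedDeriv_succ, iteratedDeriv_zero,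
      sub_right_inj]
    ring
  calc iteratedDeriv 2 (fun z => 1 + z * deriv (deriv f) z / deriv f z) 0
      = iteratedDeriv 2 (fun z => z * h z) 0 := by
        simp_rw [mul_div_assoc]; exact iteratedDeriv_const_add two_pos 1
    _ = 2 * deriv h 0 := by
        rw [iteratedDeriv_fun_mul (f := fun z => z) contDiffAt_id hh.contDiffAt]
        simp [iteratedDeriv_fun_id_zero]
    _ = 2 * (iteratedDeriv 3 f 0 - iteratedDeriv 2 f 0 ^ 2) := by rw [hh']

theorem norm_div_two_le_and_norm_div_six_le {a b : ℂ} {c : ℝ} (h₁ : ‖b - a ^ 2‖ ≤ 2 * c)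
    (h₂ : ‖3 * a ^ 2 - b‖ ≤ 4 * c) : ‖a / 2‖ ≤ √(3 * c) / 2 ∧ ‖b / 6‖ ≤ 5 * c / 6 := by
  have ha : 2 * ‖a‖ ^ 2 ≤ 6 * c := by
    have htri := norm_add_le (b - a ^ 2) (3 * a ^ 2 - b)
    rw [show b - a ^ 2 + (3 * a ^ 2 - b) = 2 * a ^ 2 by ring, norm_mul, norm_pow,
      Complex.norm_two] at htri
    linarith
  have hb : 2 * ‖b‖ ≤ 10 * c := by
    have htri := norm_add_le (3 * (b - a ^ 2)) (3 * a ^ 2 - b)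
    rw [show 3 * (b - a ^ 2) + (3 * a ^ 2 - b) = 2 * b by ring, norm_mul, norm_mul,
      Complex.norm_two, Complex.norm_ofNat] at htri
    linarith
  rw [norm_div, norm_div, Complex.norm_two, Complex.norm_ofNat]
  exact ⟨by gcongr; exact Real.le_sqrt_of_sq_le (by linarith), by linarith⟩

theorem stmt13_general (β : ℝ)
    (f F : ℂ → ℂ)
    (hf : DifferentiableOn ℂ f (ball 0 1)) (hf0 : f 0 = 0) (hf1 : deriv f 0 = 1)
    (hF : DifferentiableOn ℂ F (ball 0 1))
    (hFf : ∀ᶠ z in nhds (0 : ℂ), F (f z) = z)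
    (hfre : ∀ z ∈ ball (0 : ℂ) 1, β < (1 + z * deriv (deriv f) z / deriv f z).re)
    (hFre : ∀ w ∈ ball (0 : ℂ) 1, β < (deriv F w).re) :
    ‖iteratedDeriv 2 f 0 / 2‖ ≤ Real.sqrt (3 * (1 - β)) / 2 ∧ ‖iteratedDeriv 3 f 0 / 6‖ ≤ 5 * (1 - β) / 6 := by
  have h0 : (0 : ℂ) ∈ ball (0 : ℂ) 1 := mem_ball_self one_pos
  have hfa : AnalyticAt ℂ f 0 := hf.analyticAt (isOpen_ball.mem_nhds h0)
  have hFa : AnalyticAt ℂ F (f 0) := by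
    rw [hf0]; exact hF.analyticAt (isOpen_ball.mem_nhds h0)
  have hf' : DifferentiableOn ℂ (deriv f) (ball 0 1) := hf.deriv isOpen_ball
  have hf'ne : ∀ z ∈ ball (0 : ℂ) 1, deriv f z ≠ 0 := fun z hz =>
    ne_zero_of_forall_lt_re_mul_deriv_div (β := β - 1) hf' (by rw [hf1]; exact one_ne_zero)
      (fun w hw => by have := hfre w hw; rw [add_re, one_re] at this; linarith) hz
  have hp := norm_iteratedDeriv_le_of_le_re (n := 2)
    (g := fun z => 1 + z * deriv (deriv f) z / deriv f z)
    ((differentiableOn_const 1).add ((differentiableOn_id.mul (hf'.deriv isOpen_ball)).div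
      hf' hf'ne)) (fun z hz => (hfre z hz).le) two_pos
  have hq := norm_iteratedDeriv_le_of_le_re (n := 2) (hF.deriv isOpen_ball)
    (fun w hw => (hFre w hw).le) two_pos
  have hF1 : deriv F 0 = 1 := by
    simpa [hf0, hf1] using deriv_mul_deriv_of_comp_eventuallyEq_id hfa.differentiableAt
      hFa.differentiableAt hFf
  have hF3 :=
    iteratedDeriv_three_of_comp_eventuallyEq_id hfa.contDiffAt hFa.contDiffAt hFf hf1
  rw [hf0] at hF3
  rw [iteratedDeriv_two_one_add_mul_deriv_deriv_div_deriv hfa hf1] at hp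
  rw [← iteratedDeriv_succ', hF3, hF1] at hq
  norm_num at hp hq
  exact norm_div_two_le_and_norm_div_six_le (by linarith) hq

theorem stmt13 (β : ℝ) (hβ0 : 0 ≤ β) (hβ1 : β < 1)
    (f F : ℂ → ℂ)
    (hf : DifferentiableOn ℂ f (ball 0 1)) (hf0 : f 0 = 0) (hf1 : deriv f 0 = 1)
    (hfi : InjOn f (ball 0 1))
    (hF : DifferentiableOn ℂ F (ball 0 1)) (hF0 : F 0 = 0) (hFi : InjOn F (ball 0 1))
    (hFf : ∀ᶠ z in nhds (0 : ℂ), F (f z) = z)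
    (hfre : ∀ z ∈ ball (0 : ℂ) 1, β < (1 + z * deriv (deriv f) z / deriv f z).re)
    (hFre : ∀ w ∈ ball (0 : ℂ) 1, β < (deriv F w).re) :
    ‖iteratedDeriv 2 f 0 / 2‖ ≤ Real.sqrt (3 * (1 - β)) / 2 ∧ ‖iteratedDeriv 3 f 0 / 6‖ ≤ 5 * (1 - β) / 6 :=
  stmt13_general β f F hf hf0 hf1 hF hFf hfre hFre
end

section
/- Let f be bi-univalent with inverse extension F. If zf'(z)/f(z) ≺ φ(z) and F'(w) ≺ φ(w), then the second Taylor coefficient of f satisfies |a₂| ≤ √(5(B₁ + |B₂ − B₁|))/3. -/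
/-!
Write `a₂, a₃` for the Taylor coefficients of `f`. Comparing coefficients in `z f' = (zf'/f) · f`
and in `F'(f z) f'(z) = 1` expresses the first two coefficients of `zf'/f` and of `F'` through
`a₂, a₃`; the two subordinations express them through `B₁, B₂` and the coefficients `c₁, c₂` and
`d₁, d₂` of the Schwarz functions. Eliminating `a₃` gives `d₁ = -2c₁` and
`9a₂² = B₁(3c₂ + 2d₂) + 11B₂c₁²`. The Schwarz–Pick lemma applied to `ω(z)/z` bounds
`|c₂| ≤ 1 - |c₁|²` and `|d₂| ≤ 1 - 4|c₁|²`, so `9|a₂|² ≤ 5B₁ + 11|B₂ - B₁||c₁|²` with `|c₁| ≤ 1/2`.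
-/

open Metric Set Complex

noncomputable section

open Filter Topology ComplexConjugate

section Calculus

variable {𝕜 : Type*} [NontriviallyNormedField 𝕜] {u v f F : 𝕜 → 𝕜} {x : 𝕜}

lemma iteratedDeriv_two_eq_deriv_deriv : iteratedDeriv 2 u x = deriv (deriv u) x := by
  rw [iteratedDeriv_succ, iteratedDeriv_one]

lemma iteratedDeriv_succ_id_mul_zero {n : ℕ} (hu : ContDiffAt 𝕜 (n + 1 : ℕ) u 0) :
    iteratedDeriv (n + 1) (fun z => z * u z) 0 = (n + 1) * iteratedDeriv n u 0 := by
  rw [iteratedDeriv_fun_mul (f := fun z => z) contDiffAt_id hu, Finset.sum_eq_single 1]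
  · simp [iteratedDeriv_fun_id_zero]
  · intro i _ hi
    simp [iteratedDeriv_fun_id_zero, hi]
  · simp

lemma mul_eq_id_mul_deriv_of_eq_div {g : 𝕜 → 𝕜} {s : Set 𝕜} (hfi : InjOn f s) (hs : 0 ∈ s)
    (hf0 : f 0 = 0) (hgf : ∀ z ∈ s, z ≠ 0 → g z = z * deriv f z / f z) :
    ∀ z ∈ s, g z * f z = z * deriv f z := by
  intro z hz
  rcases eq_or_ne z 0 with rfl | hz0
  · simp [hf0]
  · rw [hgf z hz hz0, div_mul_cancel₀ _ (hf0 ▸ hfi.ne hz hs hz0)]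

variable [CompleteSpace 𝕜]

lemma eventuallyEq_deriv_comp (hu : AnalyticAt 𝕜 u (v x)) (hv : AnalyticAt 𝕜 v x) :
    deriv (fun z => u (v z)) =ᶠ[𝓝 x] fun z => deriv u (v z) * deriv v z := by
  filter_upwards [hv.continuousAt.eventually hu.eventually_analyticAt, hv.eventually_analyticAt]
    with z huz hvz
  exact deriv_comp z huz.differentiableAt hvz.differentiableAt

lemma iteratedDeriv_two_comp (hu : AnalyticAt 𝕜 u (v x)) (hv : AnalyticAt 𝕜 v x) :
    iteratedDeriv 2 (fun z => u (v z)) x =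
      iteratedDeriv 2 u (v x) * deriv v x ^ 2 + deriv u (v x) * iteratedDeriv 2 v x := by
  have hu' : deriv (fun z => deriv u (v z)) x = deriv (deriv u) (v x) * deriv v x :=
    deriv_comp x hu.deriv.differentiableAt hv.differentiableAt
  simp only [iteratedDeriv_two_eq_deriv_deriv]
  rw [(eventuallyEq_deriv_comp hu hv).deriv_eq, deriv_fun_mul (c := fun z => deriv u (v z))
    (hu.deriv.comp hv).differentiableAt hv.deriv.differentiableAt, hu']
  ring

lemma eventually_deriv_comp_mul_deriv_eq_one (hF : AnalyticAt 𝕜 F (f x)) (hf : AnalyticAt 𝕜 f x)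
    (h : ∀ᶠ z in 𝓝 x, F (f z) = z) : ∀ᶠ z in 𝓝 x, deriv F (f z) * deriv f z = 1 := by
  have hid : (fun z => F (f z)) =ᶠ[𝓝 x] fun z => z := h
  filter_upwards [(eventuallyEq_deriv_comp hF hf).symm.trans hid.deriv] with z hz
  simpa using hz

lemma iteratedDeriv_of_comp_mul_deriv_eq_one {G : 𝕜 → 𝕜} (hG : AnalyticAt 𝕜 G (f x))
    (hf : AnalyticAt 𝕜 f x) (h : ∀ᶠ z in 𝓝 x, G (f z) * deriv f z = 1) (hf1 : deriv f x = 1) :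
    deriv G (f x) = -iteratedDeriv 2 f x ∧
      iteratedDeriv 2 G (f x) = 3 * iteratedDeriv 2 f x ^ 2 - iteratedDeriv 3 f x := by
  have hGf : AnalyticAt 𝕜 (fun z => G (f z)) x := hG.comp hf
  have hconst : (fun z => G (f z) * deriv f z) =ᶠ[𝓝 x] fun _ => 1 := h
  have key (n : ℕ) : ∑ i ∈ Finset.range (n + 1), (n.choose i : 𝕜) *
      iteratedDeriv i (fun z => G (f z)) x * iteratedDeriv (n - i + 1) f x =
      if n = 0 then 1 else 0 := by
    simp only [iteratedDeriv_succ']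
    rw [← iteratedDeriv_fun_mul hGf.contDiffAt hf.deriv.contDiffAt,
      (hconst.iteratedDeriv n).eq_of_nhds, iteratedDeriv_const]
  have hGf1 : deriv (fun z => G (f z)) x = deriv G (f x) * deriv f x :=
    deriv_comp x hG.differentiableAt hf.differentiableAt
  have h0 : G (f x) = 1 := by simpa [hf1] using key 0
  have h1 : iteratedDeriv 2 f x + deriv G (f x) = 0 := by
    simpa [Finset.sum_range_succ, hGf1, hf1, h0] using key 1
  have h2 : iteratedDeriv 3 f x + 2 * deriv G (f x) * iteratedDeriv 2 f x +
      (iteratedDeriv 2 G (f x) + deriv G (f x) * iteratedDeriv 2 f x) = 0 := by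
    simpa [Finset.sum_range_succ, iteratedDeriv_two_comp hG hf, hGf1, hf1, h0] using key 2
  have hG1 : deriv G (f x) = -iteratedDeriv 2 f x := by linear_combination h1
  exact ⟨hG1, by linear_combination h2 - 3 * iteratedDeriv 2 f x * hG1⟩

lemma iteratedDeriv_of_mul_eq_id_mul_deriv {g : 𝕜 → 𝕜} (hg : AnalyticAt 𝕜 g 0)
    (hf : AnalyticAt 𝕜 f 0) (hf0 : f 0 = 0) (hf1 : deriv f 0 = 1)
    (h : ∀ᶠ z in 𝓝 0, g z * f z = z * deriv f z) :
    2 * deriv g 0 = iteratedDeriv 2 f 0 ∧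
      6 * iteratedDeriv 2 g 0 = 4 * iteratedDeriv 3 f 0 - 3 * iteratedDeriv 2 f 0 ^ 2 := by
  have hE : (fun z => g z * f z) =ᶠ[𝓝 0] fun z => z * deriv f z := h
  have key (n : ℕ) : ∑ i ∈ Finset.range (n + 2), ((n + 1).choose i : 𝕜) *
      iteratedDeriv i g 0 * iteratedDeriv (n + 1 - i) f 0 =
      ((n + 1 : ℕ) : 𝕜) * iteratedDeriv (n + 1) f 0 := by
    rw [← iteratedDeriv_fun_mul hg.contDiffAt hf.contDiffAt, (hE.iteratedDeriv (n + 1)).eq_of_nhds,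
      iteratedDeriv_succ_id_mul_zero hf.deriv.contDiffAt, iteratedDeriv_succ', Nat.cast_succ]
  have h1 : g 0 = 1 := by simpa [Finset.sum_range_succ, hf0, hf1] using key 0
  have h2 : iteratedDeriv 2 f 0 + 2 * deriv g 0 = 2 * iteratedDeriv 2 f 0 := by
    simpa [Finset.sum_range_succ, hf0, hf1, h1] using key 1
  have h3 : iteratedDeriv 3 f 0 + 3 * deriv g 0 * iteratedDeriv 2 f 0 + 3 * iteratedDeriv 2 g 0 =
      3 * iteratedDeriv 3 f 0 := by
    simpa [Finset.sum_range_succ, hf0, hf1, h1] using key 2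
  have hg1 : 2 * deriv g 0 = iteratedDeriv 2 f 0 := by linear_combination h2
  exact ⟨hg1, by linear_combination 2 * h3 - 3 * iteratedDeriv 2 f 0 * hg1⟩

end Calculus

lemma norm_sub_le_norm_one_sub_conj_mul {c w : ℂ} (hc : ‖c‖ ≤ 1) (hw : ‖w‖ ≤ 1) :
    ‖w - c‖ ≤ ‖1 - conj c * w‖ := by
  have hc' : normSq c ≤ 1 := by rw [← Complex.sq_norm]; nlinarith [norm_nonneg c]
  have hw' : normSq w ≤ 1 := by rw [← Complex.sq_norm]; nlinarith [norm_nonneg w]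
  rw [norm_def, norm_def]
  apply Real.sqrt_le_sqrt
  simp only [normSq_apply, sub_re, sub_im, mul_re, mul_im, conj_re, conj_im, one_re, one_im] at *
  nlinarith [mul_nonneg (sub_nonneg.2 hc') (sub_nonneg.2 hw')]

theorem norm_deriv_le_one_sub_sq_of_mapsTo {h : ℂ → ℂ} (hd : DifferentiableOn ℂ h (ball 0 1))
    (hmaps : MapsTo h (ball 0 1) (closedBall 0 1)) : ‖deriv h 0‖ ≤ 1 - ‖h 0‖ ^ 2 := by
  have hball : ball (0 : ℂ) 1 ∈ 𝓝 0 := ball_mem_nhds 0 one_pos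
  have hh : ∀ z ∈ ball (0 : ℂ) 1, ‖h z‖ ≤ 1 := fun z hz => mem_closedBall_zero_iff.1 (hmaps hz)
  rcases (hh 0 (mem_ball_self one_pos)).eq_or_lt with hc | hc
  · have hmax : IsLocalMax (norm ∘ h) 0 := by
      filter_upwards [hball] with z hz
      simpa [hc] using hh z hz
    have hconst : h =ᶠ[𝓝 0] fun _ => h 0 :=
      eventually_eq_of_isLocalMax_norm (hd.eventually_differentiableAt hball) hmax
    simp [hconst.deriv_eq, hc]
  set c := h 0
  have hden : ∀ z ∈ ball (0 : ℂ) 1, 1 - conj c * h z ≠ 0 := by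
    intro z hz heq
    have hlt : ‖conj c * h z‖ < 1 := by
      rw [norm_mul, RCLike.norm_conj]
      nlinarith [mul_le_mul_of_nonneg_left (hh z hz) (norm_nonneg c)]
    simp [← sub_eq_zero.1 heq] at hlt
  -- Schwarz's lemma applied to the composition with the disc automorphism moving `c` to `0`
  set q : ℂ → ℂ := fun z => (h z - c) / (1 - conj c * h z)
  have hqmaps : MapsTo q (ball 0 1) (closedBall (q 0) 1) := by
    intro z hz
    rw [show q 0 = 0 by simp [q, c], mem_closedBall_zero_iff, norm_div,
      div_le_one (norm_pos_iff.2 (hden z hz))]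
    exact norm_sub_le_norm_one_sub_conj_mul hc.le (hh z hz)
  have hqd : DifferentiableOn ℂ q (ball 0 1) :=
    (hd.sub_const c).div ((differentiableOn_const 1).sub (hd.const_mul _)) hden
  have hc2 : (1 : ℂ) - conj c * c = ((1 - ‖c‖ ^ 2 : ℝ) : ℂ) := by
    rw [mul_comm, mul_conj, ← Complex.sq_norm]
    push_cast
    ring
  have hc2' : (1 : ℝ) - ‖c‖ ^ 2 ≠ 0 := by nlinarith [norm_nonneg c]
  have hq' : HasDerivAt q (deriv h 0 / ((1 - ‖c‖ ^ 2 : ℝ) : ℂ)) 0 := by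
    have hh' := (hd.differentiableAt hball).hasDerivAt
    refine ((hh'.sub_const c).div ((hh'.const_mul (conj c)).const_sub 1)
      (hden 0 (mem_ball_self one_pos))).congr_deriv ?_
    rw [show h 0 = c from rfl, sub_self, zero_mul, sub_zero, hc2]
    field_simp [ofReal_ne_zero.2 hc2']
  have := norm_deriv_le_one_of_mapsTo_ball hqd hqmaps one_pos
  rwa [hq'.deriv, norm_div, norm_real, Real.norm_of_nonneg, div_le_one] at this
  all_goals nlinarith [norm_nonneg c]

theorem norm_iteratedDeriv_two_le_of_mapsTo {ω : ℂ → ℂ} (hd : DifferentiableOn ℂ ω (ball 0 1))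
    (h0 : ω 0 = 0) (hmaps : MapsTo ω (ball 0 1) (closedBall 0 1)) :
    ‖iteratedDeriv 2 ω 0‖ ≤ 2 * (1 - ‖deriv ω 0‖ ^ 2) := by
  have hball : ball (0 : ℂ) 1 ∈ 𝓝 0 := ball_mem_nhds 0 one_pos
  have hslope : MapsTo (dslope ω 0) (ball 0 1) (closedBall 0 1) := fun z hz => by
    simpa using norm_dslope_le_div_of_mapsTo_ball hd (by rwa [h0]) hz
  have hsd : DifferentiableOn ℂ (dslope ω 0) (ball 0 1) := (differentiableOn_dslope hball).2 hd
  have hω : ω = fun z => z * dslope ω 0 z :=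
    funext fun z => by simpa [h0] using (sub_smul_dslope ω 0 z).symm
  have h2 : iteratedDeriv 2 ω 0 = 2 * deriv (dslope ω 0) 0 := by
    conv_lhs => rw [hω]
    rw [iteratedDeriv_succ_id_mul_zero (n := 1) (hsd.analyticAt hball).contDiffAt, iteratedDeriv_one]
    norm_num
  rw [h2, norm_mul, Complex.norm_two, ← dslope_same ω 0]
  linarith [norm_deriv_le_one_sub_sq_of_mapsTo hsd hslope]

namespace Subordinate

variable {g φ : ℂ → ℂ}

lemma differentiableOn (h : Subordinate g φ) (hφ : DifferentiableOn ℂ φ (ball 0 1)) :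
    DifferentiableOn ℂ g (ball 0 1) := by
  obtain ⟨ω, hωd, -, hωm, hg⟩ := h
  exact (hφ.comp hωd hωm).congr hg

lemma exists_deriv_eq_iteratedDeriv_two_eq (h : Subordinate g φ)
    (hφ : DifferentiableOn ℂ φ (ball 0 1)) :
    ∃ c e : ℂ, ‖e‖ ≤ 2 * (1 - ‖c‖ ^ 2) ∧ deriv g 0 = deriv φ 0 * c ∧
      iteratedDeriv 2 g 0 = iteratedDeriv 2 φ 0 * c ^ 2 + deriv φ 0 * e := by
  obtain ⟨ω, hωd, hω0, hωm, hg⟩ := h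
  have hball : ball (0 : ℂ) 1 ∈ 𝓝 0 := ball_mem_nhds 0 one_pos
  have hφa : AnalyticAt ℂ φ (ω 0) := by rw [hω0]; exact hφ.analyticAt hball
  have hωa : AnalyticAt ℂ ω 0 := hωd.analyticAt hball
  have hgω : g =ᶠ[𝓝 0] fun z => φ (ω z) := eventually_of_mem hball hg
  refine ⟨deriv ω 0, iteratedDeriv 2 ω 0, norm_iteratedDeriv_two_le_of_mapsTo hωd hω0
    (MapsTo.mono_right hωm ball_subset_closedBall), ?_, ?_⟩
  · have hcomp := deriv_comp 0 hφa.differentiableAt hωa.differentiableAt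
    rw [hω0] at hcomp
    exact hgω.deriv_eq.trans hcomp
  · rw [(hgω.iteratedDeriv 2).eq_of_nhds, iteratedDeriv_two_comp hφa hωa, hω0]

end Subordinate

lemma norm_le_sqrt_of_nine_mul_sq_eq {a c e₁ e₂ : ℂ} {B₁ B₂ : ℝ} (hB₁ : 0 ≤ B₁)
    (he₁ : ‖e₁‖ ≤ 2 * (1 - ‖c‖ ^ 2)) (he₂ : ‖e₂‖ ≤ 2 * (1 - ‖2 * c‖ ^ 2))
    (h : 9 * a ^ 2 = B₁ * (3 / 2 * e₁ + e₂) + 11 * B₂ * c ^ 2) :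
    ‖a‖ ≤ √(5 * (B₁ + |B₂ - B₁|)) / 3 := by
  rw [norm_mul, Complex.norm_two] at he₂
  have hc : 11 * ‖c‖ ^ 2 ≤ 5 := by nlinarith [norm_nonneg e₂]
  have hsplit : 9 * a ^ 2 =
      B₁ * (3 / 2 * e₁ + e₂ + 11 * c ^ 2) + ((B₂ - B₁ : ℝ) : ℂ) * (11 * c ^ 2) := by
    rw [h]
    push_cast
    ring
  have hsum : ‖3 / 2 * e₁ + e₂ + 11 * c ^ 2‖ ≤ 5 :=
    calc _ ≤ ‖3 / 2 * e₁‖ + ‖e₂‖ + ‖11 * c ^ 2‖ := norm_add₃_le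
      _ = 3 / 2 * ‖e₁‖ + ‖e₂‖ + 11 * ‖c‖ ^ 2 := by norm_num [norm_mul]
      _ ≤ 5 := by linarith
  have h9 : 9 * ‖a‖ ^ 2 ≤ 5 * (B₁ + |B₂ - B₁|) := by
    calc 9 * ‖a‖ ^ 2 = ‖9 * a ^ 2‖ := by simp
      _ ≤ B₁ * ‖3 / 2 * e₁ + e₂ + 11 * c ^ 2‖ + |B₂ - B₁| * (11 * ‖c‖ ^ 2) := by
        rw [hsplit]
        refine (norm_add_le _ _).trans_eq ?_
        simp only [norm_mul, norm_real, Real.norm_eq_abs, abs_of_nonneg hB₁, norm_pow]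
        norm_num
      _ ≤ B₁ * 5 + |B₂ - B₁| * 5 := by gcongr
      _ = 5 * (B₁ + |B₂ - B₁|) := by ring
  rw [le_div_iff₀ three_pos, Real.le_sqrt (by positivity) (by positivity)]
  linarith

theorem stmt14_general
    (f F : ℂ → ℂ)
    (hf : DifferentiableOn ℂ f (ball 0 1)) (hf0 : f 0 = 0) (hf1 : deriv f 0 = 1)
    (hfi : InjOn f (ball 0 1))
    (hF : DifferentiableOn ℂ F (ball 0 1))
    (hFf : ∀ᶠ z in nhds (0 : ℂ), F (f z) = z)
    (φ : ℂ → ℂ) (B₁ B₂ : ℝ)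
    (hφ : DifferentiableOn ℂ φ (ball 0 1))
    (hB₁ : 0 < B₁) (hφ1 : deriv φ 0 = (B₁ : ℂ)) (hφ2 : iteratedDeriv 2 φ 0 = 2 * (B₂ : ℂ))
    (g : ℂ → ℂ)
    (hgf : ∀ z ∈ ball (0 : ℂ) 1, z ≠ 0 → g z = z * deriv f z / f z)
    (hgsub : Subordinate g φ)
    (hFsub : Subordinate (deriv F) φ) :
    ‖iteratedDeriv 2 f 0 / 2‖ ≤ Real.sqrt (5 * (B₁ + |B₂ - B₁|)) / 3 := by
  have hball : ball (0 : ℂ) 1 ∈ 𝓝 0 := ball_mem_nhds 0 one_pos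
  have hfa : AnalyticAt ℂ f 0 := hf.analyticAt hball
  have hFa : AnalyticAt ℂ F (f 0) := by rw [hf0]; exact hF.analyticAt hball
  obtain ⟨hG1, hG2⟩ := iteratedDeriv_of_comp_mul_deriv_eq_one hFa.deriv hfa
    (eventually_deriv_comp_mul_deriv_eq_one hFa hfa hFf) hf1
  obtain ⟨hg1, hg2⟩ := iteratedDeriv_of_mul_eq_id_mul_deriv
    ((hgsub.differentiableOn hφ).analyticAt hball) hfa hf0 hf1
    (eventually_of_mem hball (mul_eq_id_mul_deriv_of_eq_div hfi (mem_ball_self one_pos) hf0 hgf))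
  obtain ⟨c, e₁, he₁, hgc, hge⟩ := hgsub.exists_deriv_eq_iteratedDeriv_two_eq hφ
  obtain ⟨d, e₂, he₂, hGd, hGe⟩ := hFsub.exists_deriv_eq_iteratedDeriv_two_eq hφ
  rw [hf0] at hG1 hG2
  rw [hφ1] at hgc hGd
  rw [hφ1, hφ2] at hge hGe
  have hdc : d = -2 * c := mul_left_cancel₀ (ofReal_ne_zero.2 hB₁.ne')
    (by linear_combination hG1 - hGd + hg1 - 2 * hgc)
  subst hdc
  refine norm_le_sqrt_of_nine_mul_sq_eq hB₁.le he₁ (by rwa [neg_mul, norm_neg] at he₂) ?_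
  linear_combination hGe + 3 / 2 * hge - hG2 - 1 / 4 * hg2

theorem stmt14
    (f F : ℂ → ℂ)
    (hf : DifferentiableOn ℂ f (ball 0 1)) (hf0 : f 0 = 0) (hf1 : deriv f 0 = 1)
    (hfi : InjOn f (ball 0 1))
    (hF : DifferentiableOn ℂ F (ball 0 1)) (hF0 : F 0 = 0) (hFi : InjOn F (ball 0 1))
    (hFf : ∀ᶠ z in nhds (0 : ℂ), F (f z) = z)
    (φ : ℂ → ℂ) (B₁ B₂ : ℝ)
    (hφ : DifferentiableOn ℂ φ (ball 0 1)) (hφ0 : φ 0 = 1)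
    (hB₁ : 0 < B₁) (hφ1 : deriv φ 0 = (B₁ : ℂ)) (hφ2 : iteratedDeriv 2 φ 0 = 2 * (B₂ : ℂ))
    (g : ℂ → ℂ) (hg0 : g 0 = 1)
    (hgf : ∀ z ∈ ball (0 : ℂ) 1, z ≠ 0 → g z = z * deriv f z / f z)
    (hgsub : Subordinate g φ)
    (hFsub : Subordinate (deriv F) φ) :
    ‖iteratedDeriv 2 f 0 / 2‖ ≤ Real.sqrt (5 * (B₁ + |B₂ - B₁|)) / 3 :=
  stmt14_general f F hf hf0 hf1 hfi hF hFf φ B₁ B₂ hφ hB₁ hφ1 hφ2 g hgf hgsub hFsub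
end
end
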